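/- arXiv:1609.04091 — 6 statements merged into one kernel-verified Lean document; each statement's English description precedes it below -/
import Mathlib

section
/- If a Horn-box modal formula (a conjunction of clauses of the form ∇(λ₁ ∧ … ∧ λₙ → λ), where each λᵢ is a positive literal built from ⊤, propositional letters, and boxes only, and ∇ is a possibly empty sequence of boxes) is satisfied at world w in two Kripke models M₁ and M₂ over the same frame, then it is satisfied at w in the intersection model whose valuation at each world is the intersection of the two valuations. -/
/-- A Kripke model: accessibility relations indexed by `ι`, valuation over letters `P`. -/
structure KModel (ι P W : Type) where
  rel : ι → W → W → Prop
  val : W → P → Prop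

/-- General positive literals: `⊤ | p | ◇_a λ | □_a λ`. -/
inductive PLit (ι P : Type) : Type
  | top : PLit ι P
  | atom : P → PLit ι P
  | dia : ι → PLit ι P → PLit ι P
  | box : ι → PLit ι P → PLit ι P

/-- Positive box-literals: `⊤ | p | □_a λ`. -/
inductive BLit (ι P : Type) : Type
  | top : BLit ι P
  | atom : P → BLit ι P
  | box : ι → BLit ι P → BLit ι P

/-- Positive diamond-literals: `⊤ | p | ◇_a λ`. -/
inductive DLit (ι P : Type) : Type
  | top : DLit ι P
  | atom : P → DLit ι P
  | dia : ι → DLit ι P → DLit ι P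

def PLit.sat {ι P W : Type} (M : KModel ι P W) : W → PLit ι P → Prop
  | _, .top => True
  | w, .atom p => M.val w p
  | w, .dia a l => ∃ v, M.rel a w v ∧ PLit.sat M v l
  | w, .box a l => ∀ v, M.rel a w v → PLit.sat M v l

def BLit.sat {ι P W : Type} (M : KModel ι P W) : W → BLit ι P → Prop
  | _, .top => True
  | w, .atom p => M.val w p
  | w, .box a l => ∀ v, M.rel a w v → BLit.sat M v l

def DLit.sat {ι P W : Type} (M : KModel ι P W) : W → DLit ι P → Prop
  | _, .top => True
  | w, .atom p => M.val w p
  | w, .dia a l => ∃ v, M.rel a w v ∧ DLit.sat M v l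

/-- Satisfaction of a property behind a prefix `∇` of universal modalities. -/
def nablaSat {ι P W : Type} (M : KModel ι P W) : List ι → W → (W → Prop) → Prop
  | [], w, Φ => Φ w
  | a :: rest, w, Φ => ∀ v, M.rel a w v → nablaSat M rest v Φ

/-- A Horn clause `∇(λ₁ ∧ … ∧ λₙ → μ)` with general positive literals;
`concl = none` encodes the consequent `⊥`. -/
structure HornClause (ι P : Type) where
  nabla : List ι
  ante : List (PLit ι P)
  concl : Option (PLit ι P)

def HornClause.sat {ι P W : Type} (M : KModel ι P W) (w : W) (c : HornClause ι P) : Prop :=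
  nablaSat M c.nabla w fun v =>
    (∀ l ∈ c.ante, PLit.sat M v l) → c.concl.elim False fun l => PLit.sat M v l

def hornSat {ι P W : Type} (M : KModel ι P W) (w : W) (φ : List (HornClause ι P)) : Prop :=
  ∀ c ∈ φ, c.sat M w

/-- A Horn-box clause: positive literals use boxes only. -/
structure HornBoxClause (ι P : Type) where
  nabla : List ι
  ante : List (BLit ι P)
  concl : Option (BLit ι P)

def HornBoxClause.sat {ι P W : Type} (M : KModel ι P W) (w : W) (c : HornBoxClause ι P) : Prop :=
  nablaSat M c.nabla w fun v =>
    (∀ l ∈ c.ante, BLit.sat M v l) → c.concl.elim False fun l => BLit.sat M v l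

def hornBoxSat {ι P W : Type} (M : KModel ι P W) (w : W) (φ : List (HornBoxClause ι P)) : Prop :=
  ∀ c ∈ φ, c.sat M w

/-- A Horn-diamond clause: positive literals use diamonds only. -/
structure HornDiaClause (ι P : Type) where
  nabla : List ι
  ante : List (DLit ι P)
  concl : Option (DLit ι P)

def HornDiaClause.sat {ι P W : Type} (M : KModel ι P W) (w : W) (c : HornDiaClause ι P) : Prop :=
  nablaSat M c.nabla w fun v =>
    (∀ l ∈ c.ante, DLit.sat M v l) → c.concl.elim False fun l => DLit.sat M v l

def hornDiaSat {ι P W : Type} (M : KModel ι P W) (w : W) (φ : List (HornDiaClause ι P)) : Prop :=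
  ∀ c ∈ φ, c.sat M w

/-- A signed literal: a positive literal or its negation (`pos = false`). -/
structure SLit (ι P : Type) where
  pos : Bool
  lit : PLit ι P

def SLit.sat {ι P W : Type} (M : KModel ι P W) (w : W) (l : SLit ι P) : Prop :=
  if l.pos then PLit.sat M w l.lit else ¬ PLit.sat M w l.lit

/-- A Krom clause `∇(ℓ₁ ∨ ℓ₂)`; `l2 = none` encodes a unit clause. -/
structure KromClause (ι P : Type) where
  nabla : List ι
  l1 : SLit ι P
  l2 : Option (SLit ι P)

def KromClause.sat {ι P W : Type} (M : KModel ι P W) (w : W) (c : KromClause ι P) : Prop :=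
  nablaSat M c.nabla w fun v =>
    SLit.sat M v c.l1 ∨ c.l2.elim False fun l => SLit.sat M v l

def kromSat {ι P W : Type} (M : KModel ι P W) (w : W) (φ : List (KromClause ι P)) : Prop :=
  ∀ c ∈ φ, c.sat M w

/-- A signed box-literal. -/
structure SBLit (ι P : Type) where
  pos : Bool
  lit : BLit ι P

def SBLit.sat {ι P W : Type} (M : KModel ι P W) (w : W) (l : SBLit ι P) : Prop :=
  if l.pos then BLit.sat M w l.lit else ¬ BLit.sat M w l.lit

/-- A Krom-box clause. -/
structure KromBoxClause (ι P : Type) where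
  nabla : List ι
  l1 : SBLit ι P
  l2 : Option (SBLit ι P)

def KromBoxClause.sat {ι P W : Type} (M : KModel ι P W) (w : W) (c : KromBoxClause ι P) : Prop :=
  nablaSat M c.nabla w fun v =>
    SBLit.sat M v c.l1 ∨ c.l2.elim False fun l => SBLit.sat M v l

def kromBoxSat {ι P W : Type} (M : KModel ι P W) (w : W) (φ : List (KromBoxClause ι P)) : Prop :=
  ∀ c ∈ φ, c.sat M w

/-- A signed diamond-literal. -/
structure SDLit (ι P : Type) where
  pos : Bool
  lit : DLit ι P

def SDLit.sat {ι P W : Type} (M : KModel ι P W) (w : W) (l : SDLit ι P) : Prop :=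
  if l.pos then DLit.sat M w l.lit else ¬ DLit.sat M w l.lit

/-- A Krom-diamond clause. -/
structure KromDiaClause (ι P : Type) where
  nabla : List ι
  l1 : SDLit ι P
  l2 : Option (SDLit ι P)

def KromDiaClause.sat {ι P W : Type} (M : KModel ι P W) (w : W) (c : KromDiaClause ι P) : Prop :=
  nablaSat M c.nabla w fun v =>
    SDLit.sat M v c.l1 ∨ c.l2.elim False fun l => SDLit.sat M v l

def kromDiaSat {ι P W : Type} (M : KModel ι P W) (w : W) (φ : List (KromDiaClause ι P)) : Prop :=
  ∀ c ∈ φ, c.sat M w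

/-- Renaming of propositional letters in a positive literal. -/
def PLit.map {ι P Q : Type} (f : P → Q) : PLit ι P → PLit ι Q
  | .top => .top
  | .atom p => .atom (f p)
  | .dia a l => .dia a (PLit.map f l)
  | .box a l => .box a (PLit.map f l)

def SLit.map {ι P Q : Type} (f : P → Q) (l : SLit ι P) : SLit ι Q :=
  ⟨l.pos, l.lit.map f⟩

def KromClause.map {ι P Q : Type} (f : P → Q) (c : KromClause ι P) : KromClause ι Q :=
  ⟨c.nabla, c.l1.map f, c.l2.map (SLit.map f)⟩

/-- The letter `q` occurs in the positive literal. -/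
def PLit.occurs {ι P : Type} (q : P) : PLit ι P → Prop
  | .top => False
  | .atom r => r = q
  | .dia _ l => PLit.occurs q l
  | .box _ l => PLit.occurs q l

/-- A positive literal containing no propositional letters. -/
def PLit.letterFree {ι P : Type} : PLit ι P → Prop
  | .top => True
  | .atom _ => False
  | .dia _ l => PLit.letterFree l
  | .box _ l => PLit.letterFree l

/-- The letter `q` occurs in the Krom clause. -/
def KromClause.occurs {ι P : Type} (c : KromClause ι P) (q : P) : Prop :=
  PLit.occurs q c.l1.lit ∨ c.l2.elim False fun l => PLit.occurs q l.lit

/-!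
Box-literals are built from letters by `∧`-preserving operations (`□_a` commutes with `∧`), so a
box-literal holds in the intersection model iff it holds in both models. A Horn clause then
transfers: its antecedents in the intersection hold in each model, so each model yields its own
instance of the consequent, and the two instances combine. The prefix `∇` only involves the frame,
which the three models share.
-/

section Intersection

variable {ι P W : Type} {rel : ι → W → W → Prop} {V₁ V₂ : W → P → Prop}

theorem BLit.sat_inter_iff (l : BLit ι P) (v : W) :
    BLit.sat ⟨rel, fun u p => V₁ u p ∧ V₂ u p⟩ v l ↔
      BLit.sat ⟨rel, V₁⟩ v l ∧ BLit.sat ⟨rel, V₂⟩ v l := by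
  induction l generalizing v with
  | top => simp only [BLit.sat, and_self]
  | atom p => rfl
  | box a l ih => simp only [BLit.sat, ih, forall_and]

theorem nablaSat_mono {M : KModel ι P W} {Φ Ψ : W → Prop} (hΦΨ : ∀ v, Φ v → Ψ v) :
    ∀ {L : List ι} {w : W}, nablaSat M L w Φ → nablaSat M L w Ψ
  | [], w, h => hΦΨ w h
  | _ :: _, _, h => fun v hv => nablaSat_mono hΦΨ (h v hv)

theorem nablaSat_and {M : KModel ι P W} {Φ Ψ : W → Prop} :
    ∀ {L : List ι} {w : W},
      nablaSat M L w Φ → nablaSat M L w Ψ → nablaSat M L w fun v => Φ v ∧ Ψ v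
  | [], _, hΦ, hΨ => ⟨hΦ, hΨ⟩
  | _ :: _, _, hΦ, hΨ => fun v hv => nablaSat_and (hΦ v hv) (hΨ v hv)

theorem nablaSat_val_irrel {V V' : W → P → Prop} {Φ : W → Prop} :
    ∀ {L : List ι} {w : W}, nablaSat ⟨rel, V⟩ L w Φ → nablaSat ⟨rel, V'⟩ L w Φ
  | [], _, h => h
  | _ :: _, _, h => fun v hv => nablaSat_val_irrel (h v hv)

theorem HornBoxClause.sat_inter {c : HornBoxClause ι P} {w : W}
    (h₁ : c.sat ⟨rel, V₁⟩ w) (h₂ : c.sat ⟨rel, V₂⟩ w) :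
    c.sat ⟨rel, fun u p => V₁ u p ∧ V₂ u p⟩ w := by
  have h := nablaSat_and (nablaSat_val_irrel (V' := fun u p => V₁ u p ∧ V₂ u p) h₁)
    (nablaSat_val_irrel h₂)
  refine nablaSat_mono (fun v ⟨hv₁, hv₂⟩ hante => ?_) h
  have hante₁ : ∀ l ∈ c.ante, BLit.sat ⟨rel, V₁⟩ v l :=
    fun l hl => ((BLit.sat_inter_iff l v).1 (hante l hl)).1
  have hante₂ : ∀ l ∈ c.ante, BLit.sat ⟨rel, V₂⟩ v l :=
    fun l hl => ((BLit.sat_inter_iff l v).1 (hante l hl)).2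
  cases hc : c.concl with
  | none => simpa [hc] using hv₁ hante₁
  | some l =>
    simp only [hc, Option.elim] at hv₁ hv₂ ⊢
    exact (BLit.sat_inter_iff l v).2 ⟨hv₁ hante₁, hv₂ hante₂⟩

end Intersection

/-- Horn-box formulas are closed under intersection of models. -/
theorem hornBox_closed_under_intersection {ι P W : Type}
    (rel : ι → W → W → Prop) (V₁ V₂ : W → P → Prop)
    (φ : List (HornBoxClause ι P)) (w : W)
    (h₁ : hornBoxSat ⟨rel, V₁⟩ w φ) (h₂ : hornBoxSat ⟨rel, V₂⟩ w φ) :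
    hornBoxSat ⟨rel, fun u p => V₁ u p ∧ V₂ u p⟩ w φ :=
  fun c hc => HornBoxClause.sat_inter (h₁ c hc) (h₂ c hc)
end

section
/- If a Horn-diamond modal formula (conjunction of clauses ∇(λ₁ ∧ … ∧ λₙ → λ) where each positive literal is built from ⊤, propositional letters, and diamonds only, and ∇ is a sequence of boxes) is satisfied at w₁ in model M₁ and at w₂ in model M₂, then it is satisfied at (w₁, w₂) in the product model. -/
/-!
In a product model a diamond-literal holds at `(w₁, w₂)` iff it holds at `w₁` and at `w₂`,
because an `α`-successor of a pair is exactly a pair of `α`-successors. Likewise every world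
reached from `(w₁, w₂)` along the boxes `∇` is a pair of worlds reached along `∇` in the factors.
There, if the antecedents of a clause hold in the product they hold in both factors, so the
consequent holds in both factors and hence in the product; a consequent `⊥` is already refuted by
the first factor.
-/

section Product

variable {ι P W₁ W₂ : Type} {M₁ : KModel ι P W₁} {M₂ : KModel ι P W₂}

def KModel.prod (M₁ : KModel ι P W₁) (M₂ : KModel ι P W₂) : KModel ι P (W₁ × W₂) :=
  ⟨fun a x y => M₁.rel a x.1 y.1 ∧ M₂.rel a x.2 y.2,
   fun x p => M₁.val x.1 p ∧ M₂.val x.2 p⟩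

theorem DLit.sat_prod_iff (l : DLit ι P) (x : W₁ × W₂) :
    DLit.sat (M₁.prod M₂) x l ↔ DLit.sat M₁ x.1 l ∧ DLit.sat M₂ x.2 l := by
  induction l generalizing x with
  | top => simp only [DLit.sat, and_self]
  | atom p => rfl
  | dia a l ih =>
    constructor
    · rintro ⟨v, ⟨r₁, r₂⟩, hv⟩
      obtain ⟨hv₁, hv₂⟩ := (ih v).1 hv
      exact ⟨⟨v.1, r₁, hv₁⟩, ⟨v.2, r₂, hv₂⟩⟩
    · rintro ⟨⟨v₁, r₁, hv₁⟩, ⟨v₂, r₂, hv₂⟩⟩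
      exact ⟨(v₁, v₂), ⟨r₁, r₂⟩, (ih (v₁, v₂)).2 ⟨hv₁, hv₂⟩⟩

theorem nablaSat_prod {Φ₁ : W₁ → Prop} {Φ₂ : W₂ → Prop} {Φ : W₁ × W₂ → Prop}
    (hΦ : ∀ x : W₁ × W₂, Φ₁ x.1 → Φ₂ x.2 → Φ x) (n : List ι) {w₁ : W₁} {w₂ : W₂}
    (h₁ : nablaSat M₁ n w₁ Φ₁) (h₂ : nablaSat M₂ n w₂ Φ₂) :
    nablaSat (M₁.prod M₂) n (w₁, w₂) Φ := by
  induction n generalizing w₁ w₂ with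
  | nil => exact hΦ _ h₁ h₂
  | cons a rest ih =>
    rintro ⟨v₁, v₂⟩ ⟨r₁, r₂⟩
    exact ih (h₁ v₁ r₁) (h₂ v₂ r₂)

theorem HornDiaClause.sat.prod {c : HornDiaClause ι P} {w₁ : W₁} {w₂ : W₂}
    (h₁ : c.sat M₁ w₁) (h₂ : c.sat M₂ w₂) : c.sat (M₁.prod M₂) (w₁, w₂) := by
  refine nablaSat_prod (fun x hx₁ hx₂ hante => ?_) c.nabla h₁ h₂
  have hante₁ : ∀ l ∈ c.ante, DLit.sat M₁ x.1 l :=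
    fun l hl => ((DLit.sat_prod_iff l x).1 (hante l hl)).1
  have hante₂ : ∀ l ∈ c.ante, DLit.sat M₂ x.2 l :=
    fun l hl => ((DLit.sat_prod_iff l x).1 (hante l hl)).2
  cases hconcl : c.concl with
  | none => simpa only [hconcl, Option.elim] using hx₁ hante₁
  | some l =>
    simp only [hconcl, Option.elim] at hx₁ hx₂ ⊢
    exact (DLit.sat_prod_iff l x).2 ⟨hx₁ hante₁, hx₂ hante₂⟩

end Product

/-- Horn-diamond formulas are closed under product of models. -/
theorem hornDia_closed_under_product {ι P W₁ W₂ : Type}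
    (rel₁ : ι → W₁ → W₁ → Prop) (rel₂ : ι → W₂ → W₂ → Prop)
    (V₁ : W₁ → P → Prop) (V₂ : W₂ → P → Prop)
    (φ : List (HornDiaClause ι P)) (w₁ : W₁) (w₂ : W₂)
    (h₁ : hornDiaSat ⟨rel₁, V₁⟩ w₁ φ) (h₂ : hornDiaSat ⟨rel₂, V₂⟩ w₂ φ) :
    hornDiaSat
      ⟨fun a x y => rel₁ a x.1 y.1 ∧ rel₂ a x.2 y.2,
       fun x p => V₁ x.1 p ∧ V₂ x.2 p⟩ (w₁, w₂) φ :=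
  fun c hc => (h₁ c hc).prod (h₂ c hc)
end

section
/- There is no Horn formula of multimodal logic K_N over the propositional alphabet {p, q} that is equivalent to p ∨ q, i.e., no conjunction of Horn clauses φ over {p,q} such that for every Kripke model M and world w, M,w ⊩ p ∨ q iff M,w ⊩ φ. -/
/-!
At a world without successors every positive literal is evaluated propositionally (`◇_a λ` is
false, `□_a λ` true), and a positive literal holds under the intersection of two valuations iff it
holds under both. Hence Horn formulas, like propositional Horn formulas, are preserved under
intersecting the valuations of such a world. The valuations `{p}` and `{q}` satisfy `p ∨ q`, their
intersection does not.
-/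

def pointModel (ι : Type) {P : Type} (v : P → Prop) : KModel ι P Unit :=
  ⟨fun _ _ _ => False, fun _ => v⟩

section PointModel

variable {ι P : Type}

theorem PLit.sat_pointModel_inf (v₁ v₂ : P → Prop) (l : PLit ι P) :
    l.sat (pointModel ι (v₁ ⊓ v₂)) () ↔
      l.sat (pointModel ι v₁) () ∧ l.sat (pointModel ι v₂) () := by
  cases l <;> simp [PLit.sat, pointModel]

theorem HornClause.sat_pointModel_inf {v₁ v₂ : P → Prop} {c : HornClause ι P}
    (h₁ : c.sat (pointModel ι v₁) ()) (h₂ : c.sat (pointModel ι v₂) ()) :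
    c.sat (pointModel ι (v₁ ⊓ v₂)) () := by
  obtain ⟨_ | ⟨_, _⟩, ante, concl⟩ := c
  · intro hante
    have hante₁ : ∀ l ∈ ante, l.sat (pointModel ι v₁) () :=
      fun l hl => ((PLit.sat_pointModel_inf v₁ v₂ l).mp (hante l hl)).1
    have hante₂ : ∀ l ∈ ante, l.sat (pointModel ι v₂) () :=
      fun l hl => ((PLit.sat_pointModel_inf v₁ v₂ l).mp (hante l hl)).2
    cases concl with
    | none => exact h₁ hante₁
    | some l => exact (PLit.sat_pointModel_inf v₁ v₂ l).mpr ⟨h₁ hante₁, h₂ hante₂⟩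
  · intro _ hrel
    exact hrel.elim

theorem hornSat_pointModel_inf {v₁ v₂ : P → Prop} {φ : List (HornClause ι P)}
    (h₁ : hornSat (pointModel ι v₁) () φ) (h₂ : hornSat (pointModel ι v₂) () φ) :
    hornSat (pointModel ι (v₁ ⊓ v₂)) () φ :=
  fun c hc => HornClause.sat_pointModel_inf (h₁ c hc) (h₂ c hc)

end PointModel

/-- The letters are encoded as `Bool`: `p = false`, `q = true`. -/
theorem no_horn_translation_of_or (ι : Type) :
    ¬ ∃ φ : List (HornClause ι Bool),
      ∀ (W : Type) (M : KModel ι Bool W) (w : W),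
        (M.val w false ∨ M.val w true) ↔ hornSat M w φ := by
  rintro ⟨φ, hφ⟩
  have hp : hornSat (pointModel ι (· = false)) () φ := (hφ _ _ ()).mp (Or.inl rfl)
  have hq : hornSat (pointModel ι (· = true)) () φ := (hφ _ _ ()).mp (Or.inr rfl)
  obtain h | h := (hφ _ _ ()).mpr (hornSat_pointModel_inf hp hq)
  · exact Bool.false_ne_true h.2
  · exact Bool.false_ne_true h.1.symm
end

section
/- There is no Krom formula of multimodal logic K_N over the propositional alphabet {p, q, r} that is equivalent to (p ∧ q) → r, i.e., no conjunction of at-most-binary clauses φ over {p,q,r} such that for every Kripke model M and world w, M,w ⊩ (p ∧ q → r) iff M,w ⊩ φ. -/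
/-! The one-point models with no accessible worlds satisfying a Krom formula are closed under
the pointwise majority of valuations: there every positive literal is `⊤`, `⊥` or a letter,
so each clause becomes a propositional clause of width at most two, and majority is
self-dual and preserves binary disjunctions. The valuations `(p, q, r) = (1, 0, 0)`,
`(0, 1, 0)` and `(1, 1, 1)` satisfy `(p ∧ q) → r`, but their majority `(1, 1, 0)` does not. -/

def majority (a b c : Prop) : Prop := (a ∧ b) ∨ (a ∧ c) ∨ (b ∧ c)

theorem majority_not {a b c : Prop} : majority (¬a) (¬b) (¬c) ↔ ¬majority a b c := by
  unfold majority; tauto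

theorem majority_or {a₁ b₁ a₂ b₂ a₃ b₃ : Prop}
    (h₁ : a₁ ∨ b₁) (h₂ : a₂ ∨ b₂) (h₃ : a₃ ∨ b₃) :
    majority a₁ a₂ a₃ ∨ majority b₁ b₂ b₃ := by
  unfold majority; tauto

section PointModel

variable {ι P : Type} (v₁ v₂ v₃ : P → Prop)

local notation "maj" => pointModel ι fun p => majority (v₁ p) (v₂ p) (v₃ p)

theorem PLit.sat_pointModel_majority (l : PLit ι P) :
    l.sat maj () ↔ majority (l.sat (pointModel ι v₁) ()) (l.sat (pointModel ι v₂) ())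
      (l.sat (pointModel ι v₃) ()) := by
  cases l <;> simp [PLit.sat, pointModel, majority]

theorem SLit.sat_pointModel_majority (l : SLit ι P) :
    l.sat maj () ↔ majority (l.sat (pointModel ι v₁) ()) (l.sat (pointModel ι v₂) ())
      (l.sat (pointModel ι v₃) ()) := by
  obtain ⟨_ | _, l⟩ := l
  · simp only [SLit.sat, Bool.false_eq_true, if_false, PLit.sat_pointModel_majority, majority_not]
  · simp only [SLit.sat, if_true, PLit.sat_pointModel_majority]

theorem Option.elim_sLit_sat_pointModel_majority (o : Option (SLit ι P)) :
    o.elim False (SLit.sat maj ()) ↔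
      majority (o.elim False (SLit.sat (pointModel ι v₁) ()))
        (o.elim False (SLit.sat (pointModel ι v₂) ()))
        (o.elim False (SLit.sat (pointModel ι v₃) ())) := by
  cases o with
  | none => simp [majority]
  | some l => exact SLit.sat_pointModel_majority v₁ v₂ v₃ l

theorem KromClause.sat_pointModel_majority {c : KromClause ι P}
    (h₁ : c.sat (pointModel ι v₁) ()) (h₂ : c.sat (pointModel ι v₂) ())
    (h₃ : c.sat (pointModel ι v₃) ()) : c.sat maj () := by
  unfold KromClause.sat at *
  cases hnabla : c.nabla with
  | cons => exact fun _ h => h.elim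
  | nil =>
    simp only [hnabla, nablaSat] at h₁ h₂ h₃ ⊢
    rw [SLit.sat_pointModel_majority, Option.elim_sLit_sat_pointModel_majority]
    exact majority_or h₁ h₂ h₃

theorem kromSat_pointModel_majority {φ : List (KromClause ι P)}
    (h₁ : kromSat (pointModel ι v₁) () φ) (h₂ : kromSat (pointModel ι v₂) () φ)
    (h₃ : kromSat (pointModel ι v₃) () φ) :
    kromSat maj () φ :=
  fun c hc => KromClause.sat_pointModel_majority v₁ v₂ v₃ (h₁ c hc) (h₂ c hc) (h₃ c hc)

end PointModel

/-- no Krom formula over the alphabet `{p, q, r}` (encoded as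
`Fin 3`, `p = 0`, `q = 1`, `r = 2`) is equivalent to `(p ∧ q) → r`. -/
theorem no_krom_translation_of_pq_imp_r (ι : Type) :
    ¬ ∃ φ : List (KromClause ι (Fin 3)),
      ∀ (W : Type) (M : KModel ι (Fin 3) W) (w : W),
        ((M.val w 0 ∧ M.val w 1) → M.val w 2) ↔ kromSat M w φ := by
  rintro ⟨φ, hφ⟩
  have sat_of_val (v : Fin 3 → Prop) (hv : v 0 ∧ v 1 → v 2) :
      kromSat (pointModel ι v) () φ :=
    (hφ _ _ ()).mp hv
  have hmaj := kromSat_pointModel_majority _ _ _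
    (sat_of_val ![True, False, False] (by simp)) (sat_of_val ![False, True, False] (by simp))
    (sat_of_val ![True, True, True] (by simp))
  simpa [pointModel, majority] using (hφ _ _ ()).mpr hmaj
end

section
/- Let M be a Kripke model, w a world with at least one R_α-successor, and M* the extension of M by a fresh world w* with w R_α w* and empty valuation at w*. Then for every positive diamond-literal λ (λ ::= ⊤ | p | ◇_β λ) and every old world t: M,t ⊩ λ iff M*,t ⊩ λ. -/
theorem DLit.sat_map {ι P W W' : Type} {M : KModel ι P W} {N : KModel ι P W'} (f : W → W')
    (hrel : ∀ b x y, M.rel b x y → N.rel b (f x) (f y))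
    (hval : ∀ x p, M.val x p → N.val (f x) p) :
    ∀ (l : DLit ι P) (x : W), DLit.sat M x l → DLit.sat N (f x) l
  | .top, _, _ => trivial
  | .atom p, x, h => hval x p h
  | .dia b l, x, ⟨y, hxy, hy⟩ => ⟨f y, hrel b x y hxy, DLit.sat_map f hrel hval l y hy⟩

/- `M` embeds into `M*` by `Sum.inl`; conversely, sending `w*` to an old `a`-successor `v` of `w`
maps `M*` onto `M`, since `w*` has no successors and no true letters. -/
/-- if `w` has at least one `a`-successor, adding a fresh world
`w*` as an extra `a`-successor of `w` with empty valuation does not change the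
truth of any positive diamond-literal at any old world. -/
theorem dlit_sat_iff_extension_empty {ι P W : Type}
    (a : ι) (rel : ι → W → W → Prop) (V : W → P → Prop) (w : W)
    (hsucc : ∃ v, rel a w v) :
    ∀ (l : DLit ι P) (t : W),
      DLit.sat ⟨rel, V⟩ t l ↔
      DLit.sat
        (⟨fun b x y =>
            match x, y with
            | .inl u, .inl v => rel b u v
            | .inl u, .inr _ => b = a ∧ u = w
            | .inr _, _ => False,
          fun x p =>
            match x with
            | .inl u => V u p
            | .inr _ => False⟩ : KModel ι P (W ⊕ Unit))
        (.inl t) l := by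
  obtain ⟨v, hwv⟩ := hsucc
  refine fun l t => ⟨DLit.sat_map Sum.inl (fun _ _ _ h => h) (fun _ _ h => h) l t,
    DLit.sat_map (Sum.elim id fun _ => v) ?_ ?_ l (.inl t)⟩
  · rintro b (x | _) (y | _) h
    · exact h
    · obtain ⟨rfl, rfl⟩ := h
      exact hwv
    · exact h.elim
    · exact h.elim
  · rintro (x | _) p h
    · exact h
    · exact h.elim
end

section
/- There is no Krom-diamond formula φ over the propositional alphabet {p, q} that is equivalent to □_α p → q: no conjunction of clauses ∇(ℓ₁ ∨ ℓ₂), where literals are positive diamond-literals or their negations, such that for every model M over {p, q} and world w, M,w ⊩ (□_α p → q) iff M,w ⊩ φ. -/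
/-!
Positive diamond-literals are existential-positive, so they are preserved along simulations;
the box prefix of a Krom clause only looks forward along edges. Hence a Krom-diamond clause true
at `x'` in `M'` is true at `x` in `M` whenever `M` simulates into `M'` (relating `x` to `x'`)
through a relation whose converse is again a simulation.

In the model with a single edge `w → u` (`false → true` in `edgeModel`) and `p` true only at
`u`, the formula `□_a p → q` fails at `w`. Adding a dead-end successor `none` of `w` where `p` fails makes it true at `w`, yet the two
models are mutually similar (the dead end is simulated by `u`), so every Krom-diamond formula
true at the root of the larger model is true at `w` as well.
-/

namespace KModel

variable {ι P W W' : Type}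

def IsSimulation (M : KModel ι P W) (M' : KModel ι P W') (Z : W → W' → Prop) : Prop :=
  ∀ ⦃x x'⦄, Z x x' →
    (∀ p, M.val x p → M'.val x' p) ∧ ∀ a y, M.rel a x y → ∃ y', M'.rel a x' y' ∧ Z y y'

variable {M : KModel ι P W} {M' : KModel ι P W'} {Z : W → W' → Prop}

theorem dLitSat_of_isSimulation (hZ : M.IsSimulation M' Z) (l : DLit ι P) :
    ∀ ⦃x x'⦄, Z x x' → DLit.sat M x l → DLit.sat M' x' l := by
  induction l with
  | top => exact fun _ _ _ _ => trivial
  | atom p => exact fun _ _ hxx' => (hZ hxx').1 p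
  | dia a l ih =>
    rintro x x' hxx' ⟨y, hxy, hy⟩
    obtain ⟨y', hxy', hyy'⟩ := (hZ hxx').2 a y hxy
    exact ⟨y', hxy', ih hyy' hy⟩

theorem dLitSat_iff_of_isSimulation {Z' : W' → W → Prop} (hZ : M.IsSimulation M' Z)
    (hZ' : M'.IsSimulation M Z') (hconv : ∀ ⦃x x'⦄, Z x x' → Z' x' x) {x : W} {x' : W'}
    (hxx' : Z x x') (l : DLit ι P) : DLit.sat M x l ↔ DLit.sat M' x' l :=
  ⟨dLitSat_of_isSimulation hZ l hxx', dLitSat_of_isSimulation hZ' l (hconv hxx')⟩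

theorem nablaSat_of_forth
    (hforth : ∀ ⦃x x'⦄, Z x x' → ∀ a y, M.rel a x y → ∃ y', M'.rel a x' y' ∧ Z y y')
    {Φ : W → Prop} {Φ' : W' → Prop} (hΦ : ∀ ⦃y y'⦄, Z y y' → Φ' y' → Φ y) (L : List ι) :
    ∀ ⦃x x'⦄, Z x x' → nablaSat M' L x' Φ' → nablaSat M L x Φ := by
  induction L with
  | nil => exact fun _ _ hxx' => hΦ hxx'
  | cons a L ih =>
    intro x x' hxx' hsat y hxy
    obtain ⟨y', hxy', hyy'⟩ := hforth hxx' a y hxy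
    exact ih hyy' (hsat y' hxy')

theorem kromDiaSat_of_isSimulation {Z' : W' → W → Prop} (hZ : M.IsSimulation M' Z)
    (hZ' : M'.IsSimulation M Z') (hconv : ∀ ⦃x x'⦄, Z x x' → Z' x' x) {x : W} {x' : W'}
    (hxx' : Z x x') {φ : List (KromDiaClause ι P)} (hφ : kromDiaSat M' x' φ) :
    kromDiaSat M x φ := by
  have hlit : ∀ ⦃y y'⦄, Z y y' → ∀ l : SDLit ι P, SDLit.sat M' y' l → SDLit.sat M y l := by
    intro y y' hyy' l
    simp only [SDLit.sat, dLitSat_iff_of_isSimulation hZ hZ' hconv hyy']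
    exact id
  intro c hc
  refine nablaSat_of_forth (fun _ _ hxx' => (hZ hxx').2) ?_ c.nabla hxx' (hφ c hc)
  rintro y y' hyy' (h1 | h2)
  · exact Or.inl (hlit hyy' _ h1)
  · refine Or.inr ?_
    revert h2
    cases c.l2 with
    | none => exact id
    | some l => exact hlit hyy' l

end KModel

open KModel

def edgeModel (ι : Type) : KModel ι Bool Bool :=
  ⟨fun _ x y => x = false ∧ y = true, fun x b => x = true ∧ b = false⟩

def edgeDeadEndModel (ι : Type) : KModel ι Bool (Option Bool) :=
  ⟨fun _ x y => x = some false ∧ (y = some true ∨ y = none),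
   fun x b => x = some true ∧ b = false⟩

theorem edgeModel_isSimulation (ι : Type) :
    (edgeModel ι).IsSimulation (edgeDeadEndModel ι) fun x y => y = some x := by
  rintro x _ rfl
  refine ⟨fun _ h => ⟨congrArg some h.1, h.2⟩, ?_⟩
  rintro _ y ⟨rfl, rfl⟩
  exact ⟨some true, ⟨rfl, Or.inl rfl⟩, rfl⟩

theorem edgeDeadEndModel_isSimulation (ι : Type) :
    (edgeDeadEndModel ι).IsSimulation (edgeModel ι)
      fun y x => y = some x ∨ (y = none ∧ x = true) := by
  rintro _ x (rfl | ⟨rfl, rfl⟩)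
  · refine ⟨fun _ h => ⟨Option.some_injective _ h.1, h.2⟩, ?_⟩
    rintro _ _ ⟨hx, hy⟩
    cases Option.some_injective _ hx
    exact ⟨true, ⟨rfl, rfl⟩, hy.imp id (⟨·, rfl⟩)⟩
  · exact ⟨fun _ h => absurd h.1 (by simp), fun _ _ h => absurd h.1 (by simp)⟩

/-- The alphabet `{p, q}` is `Bool`, with `p = false` and `q = true`. -/
theorem no_kromDia_translation_of_box_imp (ι : Type) (a : ι) :
    ¬ ∃ φ : List (KromDiaClause ι Bool),
      ∀ (W : Type) (M : KModel ι Bool W) (w : W),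
        ((∀ v, M.rel a w v → M.val v false) → M.val w true) ↔
        kromDiaSat M w φ := by
  rintro ⟨φ, hφ⟩
  have hfalse : ¬ kromDiaSat (edgeModel ι) false φ := by
    rw [← hφ]
    intro h
    exact absurd (h fun _ hv => ⟨hv.2, rfl⟩).1 (by simp)
  have htrue : kromDiaSat (edgeDeadEndModel ι) (some false) φ := by
    rw [← hφ]
    intro h
    exact absurd (h none ⟨rfl, Or.inr rfl⟩).1 (by simp)
  exact hfalse <| kromDiaSat_of_isSimulation (edgeModel_isSimulation ι)
    (edgeDeadEndModel_isSimulation ι) (fun _ _ => Or.inl) rfl htrue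
end
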